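/- arXiv:2105.12800 — 5 statements merged into one kernel-verified Lean document; each statement's English description precedes it below -/
import Mathlib

section
/- Let 0 < s < 1/2, θ ∈ (0,1), A₁ < A₂ real numbers, and ψ(x) = 1 for x ≤ A₁, ψ(x) = 1 − (1−θ)(x−A₁)/(A₂−A₁) for A₁ < x ≤ A₂, ψ(x) = θ for x > A₂. Then (−∂_{xx})^s ψ(A₂) = −c_s(1−θ)·(1/(2s) + 1/(1−2s))·(A₂−A₁)^{−2s}, where (−∂_{xx})^s u(x) = c_s · p.v. ∫_ℝ (u(x)−u(y))/|x−y|^{1+2s} dy. -/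
/-!
Since `ψ A₂ = θ`, the integrand vanishes to the right of `A₂`. On the ramp `(A₁, A₂]` the
numerator is `(θ - 1) (A₂ - y) / (A₂ - A₁)`, so the integrand is a multiple of `(A₂ - y)^(-2s)`,
which is integrable near `A₂` because `2s < 1`; to the left of `A₁` it is a multiple of
`(A₂ - y)^(-(1+2s))`, which is integrable at `-∞` because `s > 0`. The two power integrals
contribute the terms `1/(1-2s)` and `1/(2s)`.
-/

open Set MeasureTheory

lemma integrableOn_Iic_comp_sub_left {E : Type*} [NormedAddCommGroup E] {f : ℝ → E} {c a : ℝ}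
    (hf : IntegrableOn f (Ioi (c - a))) : IntegrableOn (fun y => f (c - y)) (Iic a) := by
  rw [← integrableOn_Ici_iff_integrableOn_Ioi,
    ← (Measure.measurePreserving_sub_left volume c).integrableOn_comp_preimage
      (measurableEmbedding_subLeft c)] at hf
  rwa [show (c - ·) ⁻¹' Ici (c - a) = Iic a by ext y; simp] at hf

lemma integral_Iic_comp_sub_left {E : Type*} [NormedAddCommGroup E] [NormedSpace ℝ E]
    (f : ℝ → E) (c a : ℝ) : ∫ y in Iic a, f (c - y) = ∫ t in Ioi (c - a), f t := by
  have h := (Measure.measurePreserving_sub_left volume c).setIntegral_preimage_emb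
    (measurableEmbedding_subLeft c) f (Ici (c - a))
  rwa [show (c - ·) ⁻¹' Ici (c - a) = Iic a by ext y; simp, integral_Ici_eq_integral_Ioi] at h

theorem integral_eq_Iic_add_Ioc_add_Ioi {E : Type*} [NormedAddCommGroup E] [NormedSpace ℝ E]
    {f : ℝ → E} {a b : ℝ} (hab : a ≤ b) (ha : IntegrableOn f (Iic a))
    (hab' : IntegrableOn f (Ioc a b)) (hb : IntegrableOn f (Ioi b)) :
    ∫ x, f x = (∫ x in Iic a, f x) + (∫ x in Ioc a b, f x) + ∫ x in Ioi b, f x := by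
  rw [← intervalIntegral.integral_Iic_add_Ioi ha (Ioc_union_Ioi_eq_Ioi hab ▸ hab'.union hb),
    ← Ioc_union_Ioi_eq_Ioi hab, setIntegral_union Ioc_disjoint_Ioi_same measurableSet_Ioi hab' hb,
    add_assoc]

lemma integrableOn_Iic_sub_rpow {p a c : ℝ} (hp : p < -1) (hac : a < c) :
    IntegrableOn (fun y => (c - y) ^ p) (Iic a) :=
  integrableOn_Iic_comp_sub_left (integrableOn_Ioi_rpow_of_lt hp (sub_pos.2 hac))

lemma integral_Iic_sub_rpow {p a c : ℝ} (hp : p < -1) (hac : a < c) :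
    ∫ y in Iic a, (c - y) ^ p = -(c - a) ^ (p + 1) / (p + 1) := by
  rw [integral_Iic_comp_sub_left (· ^ p), integral_Ioi_rpow_of_lt hp (sub_pos.2 hac)]

lemma intervalIntegrable_sub_rpow {r : ℝ} (hr : -1 < r) (a c : ℝ) :
    IntervalIntegrable (fun y => (c - y) ^ r) volume a c := by
  simpa using (intervalIntegral.intervalIntegrable_rpow' hr (a := c - a) (b := 0)).comp_sub_left c

lemma integral_sub_rpow {r : ℝ} (hr : -1 < r) (a c : ℝ) :
    ∫ y in a..c, (c - y) ^ r = (c - a) ^ (r + 1) / (r + 1) := by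
  rw [intervalIntegral.integral_comp_sub_left (· ^ r), sub_self, integral_rpow (Or.inl hr),
    Real.zero_rpow (by linarith), sub_zero]

lemma div_abs_sub_rpow {k c y p : ℝ} (hy : y ≤ c) :
    k / |c - y| ^ p = k * (c - y) ^ (-p) := by
  rw [abs_of_nonneg (sub_nonneg.2 hy), Real.rpow_neg (sub_nonneg.2 hy), div_eq_mul_inv]

lemma mul_sub_div_abs_rpow {k c y q : ℝ} (hq : q ≠ 0) (hy : y ≤ c) :
    k * (c - y) / |c - y| ^ (1 + q) = k * (c - y) ^ (-q) := by
  rw [div_abs_sub_rpow hy, mul_assoc, ← Real.rpow_one_add' (sub_nonneg.2 hy) (by simpa)]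
  ring_nf

lemma integral_eq_of_eqOn_sub_rpow_pieces {F : ℝ → ℝ} {k q a c : ℝ} (hq0 : 0 < q) (hq1 : q < 1)
    (hac : a < c) (hfar : EqOn (fun y => k * (c - y) ^ (-(1 + q))) F (Iic a))
    (hramp : EqOn (fun y => k / (c - a) * (c - y) ^ (-q)) F (Ioc a c))
    (hflat : EqOn (fun _ => 0) F (Ioi c)) :
    ∫ y, F y = k * (1 / q + 1 / (1 - q)) * (c - a) ^ (-q) := by
  have hca : c - a ≠ 0 := (sub_pos.2 hac).ne'
  have hp : -(1 + q) < -1 := by linarith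
  have hr : -1 < -q := by linarith
  rw [integral_eq_Iic_add_Ioc_add_Ioi hac.le
      (IntegrableOn.congr_fun ((integrableOn_Iic_sub_rpow hp hac).const_mul _) hfar
        measurableSet_Iic)
      ((((intervalIntegrable_sub_rpow hr a c).const_mul _).1).congr_fun hramp measurableSet_Ioc)
      (integrableOn_zero.congr_fun hflat measurableSet_Ioi),
    ← setIntegral_congr_fun measurableSet_Iic hfar, ← setIntegral_congr_fun measurableSet_Ioc hramp,
    ← setIntegral_congr_fun measurableSet_Ioi hflat, integral_const_mul,
    ← intervalIntegral.integral_of_le hac.le, intervalIntegral.integral_const_mul,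
    integral_Iic_sub_rpow hp hac, integral_sub_rpow hr, integral_zero, add_zero,
    show -(1 + q) + 1 = -q by ring, Real.rpow_add_one hca (-q), show -q + 1 = 1 - q by ring]
  have h1q : 1 - q ≠ 0 := by linarith
  field_simp

theorem stmt4_general (s cs θ A₁ A₂ : ℝ) (hs : 0 < s) (hs2 : s < 1/2)
    (hA : A₁ < A₂)
    (ψ : ℝ → ℝ)
    (hψ1 : ∀ x ≤ A₁, ψ x = 1)
    (hψ2 : ∀ x, A₁ < x → x ≤ A₂ → ψ x = 1 - (1-θ)*(x-A₁)/(A₂-A₁))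
    (hψ3 : ∀ x, A₂ < x → ψ x = θ) :
    cs * ∫ y : ℝ, (ψ A₂ - ψ y) / |A₂ - y| ^ (1+2*s) =
      -cs * (1-θ) * (1/(2*s) + 1/(1-2*s)) * (A₂-A₁) ^ (-(2*s)) := by
  have hD : A₂ - A₁ ≠ 0 := (sub_pos.2 hA).ne'
  have hψA₂ : ψ A₂ = θ := by rw [hψ2 A₂ hA le_rfl]; field_simp; ring
  have hfar : EqOn (fun y => (θ - 1) * (A₂ - y) ^ (-(1 + 2 * s)))
      (fun y => (ψ A₂ - ψ y) / |A₂ - y| ^ (1 + 2 * s)) (Iic A₁) := fun y hy => by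
    dsimp only
    rw [hψA₂, hψ1 y hy, div_abs_sub_rpow (hy.trans hA.le)]
  have hramp : EqOn (fun y => (θ - 1) / (A₂ - A₁) * (A₂ - y) ^ (-(2 * s)))
      (fun y => (ψ A₂ - ψ y) / |A₂ - y| ^ (1 + 2 * s)) (Ioc A₁ A₂) := fun y hy => by
    have hψy : ψ A₂ - ψ y = (θ - 1) / (A₂ - A₁) * (A₂ - y) := by
      rw [hψA₂, hψ2 y hy.1 hy.2]; field_simp; ring
    dsimp only
    rw [hψy, mul_sub_div_abs_rpow (by positivity) hy.2]
  have hflat : EqOn (fun _ => 0) (fun y => (ψ A₂ - ψ y) / |A₂ - y| ^ (1 + 2 * s)) (Ioi A₂) :=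
    fun y hy => by simp [hψ3 y hy, hψA₂]
  rw [integral_eq_of_eqOn_sub_rpow_pieces (by positivity) (by linarith) hA hfar hramp hflat]
  ring

theorem stmt4 (s cs θ A₁ A₂ : ℝ) (hs : 0 < s) (hs2 : s < 1/2)
    (hθ : θ ∈ Set.Ioo (0:ℝ) 1) (hA : A₁ < A₂) (hc : 0 < cs)
    (ψ : ℝ → ℝ)
    (hψ1 : ∀ x ≤ A₁, ψ x = 1)
    (hψ2 : ∀ x, A₁ < x → x ≤ A₂ → ψ x = 1 - (1-θ)*(x-A₁)/(A₂-A₁))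
    (hψ3 : ∀ x, A₂ < x → ψ x = θ) :
    cs * ∫ y : ℝ, (ψ A₂ - ψ y) / |A₂ - y| ^ (1+2*s) =
      -cs * (1-θ) * (1/(2*s) + 1/(1-2*s)) * (A₂-A₁) ^ (-(2*s)) :=
  stmt4_general s cs θ A₁ A₂ hs hs2 hA ψ hψ1 hψ2 hψ3
end

section
/- Let 0 < s < 1/2, θ ∈ (0,1), A₁ < A₂, and let ψ be the piecewise linear function equal to 1 on (−∞,A₁], linearly decreasing to θ on [A₁,A₂], and equal to θ on [A₂,∞). If φ: ℝ → ℝ satisfies φ ≤ ψ everywhere and φ(x) = ψ(x) at some point x, then (−∂_{xx})^s φ(x) ≥ −C_s (1−θ)(A₂−A₁)^{−2s}, where C_s := max{c_s/(2s(1−2s)), 1}. -/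
open MeasureTheory Set Real

/-!
Since `φ ≤ ψ` with equality at `x`, the integrand `(φ x - φ y) / |x - y| ^ (1 + 2s)` is bounded
below by the same expression for `ψ`. As `ψ` is nonincreasing, only `y < x` can contribute negatively,
and there `ψ y - ψ x ≤ (1 - θ) min(1, (x - y)/(A₂ - A₁))`: the ramp has slope `(1 - θ)/(A₂ - A₁)`
and total drop `1 - θ`. Integrating this minorant over `k = x - y > 0` gives
`-(1 - θ) (A₂ - A₁)^(-2s) / (2s(1 - 2s))`, the near part `k < A₂ - A₁` needing `s < 1/2` and the tail
needing `s > 0`.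
-/

section Ramp

variable {ψ : ℝ → ℝ} {a A₁ A₂ : ℝ}

theorem ramp_eq_projIcc {θ : ℝ} (hA : A₁ < A₂) (hψ1 : ∀ x ≤ A₁, ψ x = 1)
    (hψ2 : ∀ x, A₁ < x → x ≤ A₂ → ψ x = 1 - (1 - θ) * (x - A₁) / (A₂ - A₁))
    (hψ3 : ∀ x, A₂ < x → ψ x = θ) (y : ℝ) :
    ψ y = 1 - (1 - θ) / (A₂ - A₁) * (projIcc A₁ A₂ hA.le y - A₁) := by
  rcases le_or_gt y A₁ with h1 | h1
  · simp [hψ1 y h1, projIcc_of_le_left _ h1]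
  rcases le_or_gt y A₂ with h2 | h2
  · rw [hψ2 y h1 h2, projIcc_of_mem _ ⟨h1.le, h2⟩]
    ring
  · rw [hψ3 y h2, projIcc_of_right_le _ h2.le]
    field_simp [(sub_pos.2 hA).ne']
    ring

theorem antitone_of_eq_projIcc (hA : A₁ ≤ A₂) (ha : 0 ≤ a)
    (hψ : ∀ y, ψ y = 1 - a / (A₂ - A₁) * (projIcc A₁ A₂ hA y - A₁)) : Antitone ψ := by
  intro y z hyz
  have hmono : (projIcc A₁ A₂ hA y : ℝ) ≤ projIcc A₁ A₂ hA z := monotone_projIcc hA hyz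
  rw [hψ, hψ]
  gcongr

theorem sub_le_of_eq_projIcc (hA : A₁ < A₂) (ha : 0 ≤ a)
    (hψ : ∀ y, ψ y = 1 - a / (A₂ - A₁) * (projIcc A₁ A₂ hA.le y - A₁)) {x y : ℝ} (hyx : y ≤ x) :
    ψ y - ψ x ≤ a * min 1 ((x - y) / (A₂ - A₁)) := by
  have hd : 0 < A₂ - A₁ := sub_pos.2 hA
  set Δ := (projIcc A₁ A₂ hA.le x : ℝ) - projIcc A₁ A₂ hA.le y
  have hΔ_lip : Δ ≤ x - y := by
    simpa [abs_of_nonneg (sub_nonneg.2 hyx)] using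
      (le_abs_self Δ).trans (abs_projIcc_sub_projIcc hA.le)
  have hΔ_range : Δ ≤ A₂ - A₁ := by
    have := (projIcc A₁ A₂ hA.le x).2.2
    have := (projIcc A₁ A₂ hA.le y).2.1
    linarith
  have hψΔ : ψ y - ψ x = a * (Δ / (A₂ - A₁)) := by
    rw [hψ, hψ]
    ring
  rw [hψΔ]
  gcongr
  exact le_min ((div_le_one hd).2 hΔ_range) (by gcongr)

end Ramp

section Kernel

variable {s d : ℝ}

theorem min_one_div_mul_rpow_eqOn_Ioc (hd : 0 < d) :
    EqOn (fun k => min 1 (k / d) * k ^ (-(1 + 2 * s))) (fun k => d⁻¹ * k ^ (-(2 * s))) (Ioc 0 d) := by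
  intro k ⟨hk0, hkd⟩
  dsimp only
  rw [min_eq_right ((div_le_one hd).2 hkd), show -(1 + 2 * s) = -(2 * s) + -1 by ring,
    rpow_add hk0, rpow_neg_one]
  field_simp

theorem min_one_div_mul_rpow_eqOn_Ioi (hd : 0 < d) :
    EqOn (fun k => min 1 (k / d) * k ^ (-(1 + 2 * s))) (fun k => k ^ (-(1 + 2 * s))) (Ioi d) := by
  intro k hk
  simp [min_eq_left ((one_le_div hd).2 hk.le)]

variable (hs : 0 < s) (hs2 : s < 1 / 2) (hd : 0 < d)
include hs hs2 hd

theorem integrableOn_min_one_div_mul_rpow :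
    IntegrableOn (fun k => min 1 (k / d) * k ^ (-(1 + 2 * s))) (Ioi 0) := by
  rw [← Ioc_union_Ioi_eq_Ioi hd.le]
  refine IntegrableOn.union ?_ ?_
  · refine IntegrableOn.congr_fun ?_ (min_one_div_mul_rpow_eqOn_Ioc hd).symm measurableSet_Ioc
    rw [← intervalIntegrable_iff_integrableOn_Ioc_of_le hd.le]
    exact (intervalIntegral.intervalIntegrable_rpow' (by linarith)).const_mul _
  · exact (integrableOn_Ioi_rpow_of_lt (by linarith) hd).congr_fun
      (min_one_div_mul_rpow_eqOn_Ioi hd).symm measurableSet_Ioi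

theorem integral_min_one_div_mul_rpow :
    ∫ k in Ioi 0, min 1 (k / d) * k ^ (-(1 + 2 * s)) = d ^ (-(2 * s)) / (2 * s * (1 - 2 * s)) := by
  have hint := integrableOn_min_one_div_mul_rpow hs hs2 hd
  rw [← Ioc_union_Ioi_eq_Ioi hd.le] at hint ⊢
  rw [setIntegral_union Ioc_disjoint_Ioi_same measurableSet_Ioi
      (hint.mono_set subset_union_left) (hint.mono_set subset_union_right),
    setIntegral_congr_fun measurableSet_Ioc (min_one_div_mul_rpow_eqOn_Ioc hd),
    setIntegral_congr_fun measurableSet_Ioi (min_one_div_mul_rpow_eqOn_Ioi hd),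
    integral_const_mul, ← intervalIntegral.integral_of_le hd.le,
    integral_rpow (Or.inl (by linarith)), integral_Ioi_rpow_of_lt (by linarith) hd,
    zero_rpow (by linarith), show -(2 * s) + 1 = 1 + -(2 * s) by ring, rpow_add hd, rpow_one,
    show -(1 + 2 * s) + 1 = -(2 * s) by ring]
  have : 1 - 2 * s ≠ 0 := by linarith
  have : 1 + -(2 * s) ≠ 0 := by linarith
  field_simp
  ring

end Kernel

-- `c ≤ 0` covers a non-integrable `f`, whose Bochner integral is `0`.
theorem le_integral_of_minorant {α : Type*} [MeasurableSpace α] {μ : Measure α} {f g : α → ℝ}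
    {c : ℝ} (hg : Integrable g μ) (hgf : ∀ a, g a ≤ f a) (hc : c ≤ ∫ a, g a ∂μ) (hc0 : c ≤ 0) :
    c ≤ ∫ a, f a ∂μ := by
  by_cases hf : Integrable f μ
  · exact hc.trans (integral_mono hg hf hgf)
  · rwa [integral_undef hf]

theorem touching_integrand_ge {ψ φ : ℝ → ℝ} {a d p x : ℝ} (hψ : Antitone ψ)
    (hψx : ∀ y ≤ x, ψ y - ψ x ≤ a * min 1 ((x - y) / d)) (hle : ∀ y, φ y ≤ ψ y)
    (htouch : φ x = ψ x) (y : ℝ) :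
    -a * (Ioi 0).indicator (fun k => min 1 (k / d) * k ^ (-p)) (x - y) ≤
      (φ x - φ y) / |x - y| ^ p := by
  have hφψ : ψ x - ψ y ≤ φ x - φ y := by linarith [hle y]
  rcases lt_or_ge y x with hyx | hxy
  · have hk : 0 < x - y := sub_pos.2 hyx
    rw [indicator_of_mem (mem_Ioi.2 hk), abs_of_pos hk, rpow_neg hk.le, ← div_eq_mul_inv,
      ← mul_div_assoc]
    gcongr
    linarith [hψx y hyx.le]
  · rw [indicator_of_notMem (by simpa using hxy), mul_zero]
    exact div_nonneg (by linarith [hψ hxy]) (by positivity)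

theorem stmt5_general (s cs θ A₁ A₂ : ℝ) (hs : 0 < s) (hs2 : s < 1/2)
    (hθ : θ ∈ Set.Ioo (0:ℝ) 1) (hA : A₁ < A₂) (hc : 0 < cs)
    (ψ : ℝ → ℝ)
    (hψ1 : ∀ x ≤ A₁, ψ x = 1)
    (hψ2 : ∀ x, A₁ < x → x ≤ A₂ → ψ x = 1 - (1-θ)*(x-A₁)/(A₂-A₁))
    (hψ3 : ∀ x, A₂ < x → ψ x = θ)
    (φ : ℝ → ℝ)
    (hle : ∀ y, φ y ≤ ψ y) (x : ℝ) (htouch : φ x = ψ x) :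
    -(max (cs/(2*s*(1-2*s))) 1) * (1-θ) * (A₂-A₁) ^ (-(2*s)) ≤
      cs * ∫ y : ℝ, (φ x - φ y) / |x - y| ^ (1+2*s) := by
  have hd : 0 < A₂ - A₁ := sub_pos.2 hA
  have hθ1 : 0 ≤ 1 - θ := sub_nonneg.2 hθ.2.le
  have hψ := ramp_eq_projIcc hA hψ1 hψ2 hψ3
  set g := (Ioi (0:ℝ)).indicator fun k => min 1 (k / (A₂ - A₁)) * k ^ (-(1 + 2 * s))
  set I := (A₂ - A₁) ^ (-(2 * s)) / (2 * s * (1 - 2 * s))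
  have hg_int : Integrable fun y => -(1 - θ) * g (x - y) :=
    (((integrable_indicator_iff measurableSet_Ioi).2
      (integrableOn_min_one_div_mul_rpow hs hs2 hd)).comp_sub_left x).const_mul _
  have hg : ∫ y, -(1 - θ) * g (x - y) = -(1 - θ) * I := by
    rw [integral_const_mul, integral_sub_left_eq_self, integral_indicator measurableSet_Ioi,
      integral_min_one_div_mul_rpow hs hs2 hd]
  have hminorant := touching_integrand_ge (p := 1 + 2 * s) (antitone_of_eq_projIcc hA.le hθ1 hψ)
    (fun y hy => sub_le_of_eq_projIcc hA hθ1 hψ hy) hle htouch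
  calc -(max (cs/(2*s*(1-2*s))) 1) * (1-θ) * (A₂-A₁) ^ (-(2*s))
      ≤ -(cs/(2*s*(1-2*s))) * (1-θ) * (A₂-A₁) ^ (-(2*s)) := by gcongr; exact le_max_left _ _
    _ = cs * (-(1 - θ) * I) := by ring
    _ ≤ cs * ∫ y : ℝ, (φ x - φ y) / |x - y| ^ (1+2*s) := by
      gcongr
      refine le_integral_of_minorant hg_int hminorant hg.ge ?_
      have hs1 : 0 < 1 - 2 * s := by linarith
      exact mul_nonpos_of_nonpos_of_nonneg (by linarith) (by positivity)

theorem stmt5 (s cs θ A₁ A₂ : ℝ) (hs : 0 < s) (hs2 : s < 1/2)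
    (hθ : θ ∈ Set.Ioo (0:ℝ) 1) (hA : A₁ < A₂) (hc : 0 < cs)
    (ψ : ℝ → ℝ)
    (hψ1 : ∀ x ≤ A₁, ψ x = 1)
    (hψ2 : ∀ x, A₁ < x → x ≤ A₂ → ψ x = 1 - (1-θ)*(x-A₁)/(A₂-A₁))
    (hψ3 : ∀ x, A₂ < x → ψ x = θ)
    (φ : ℝ → ℝ) (M L : ℝ)
    (hbdd : ∀ x, |φ x| ≤ M) (hLip : ∀ x y, |φ x - φ y| ≤ L * |x - y|)
    (hle : ∀ y, φ y ≤ ψ y) (x : ℝ) (htouch : φ x = ψ x) :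
    -(max (cs/(2*s*(1-2*s))) 1) * (1-θ) * (A₂-A₁) ^ (-(2*s)) ≤
      cs * ∫ y : ℝ, (φ x - φ y) / |x - y| ^ (1+2*s) :=
  stmt5_general s cs θ A₁ A₂ hs hs2 hθ hA hc ψ hψ1 hψ2 hψ3 φ hle x htouch
end

section
/- Let β > ν > 0, a ∈ (0,1], b ≥ 1, and g(l) := (a l^β − b)^{−1/ν} for l > (b/a)^{1/β}. If β/ν ≥ d − 2 for an integer d ≥ 1, then for all l > (b/a)^{1/β} one has g''(l) + ((d−1)/l) g'(l) ≥ 0; i.e., the radial function y ↦ g(|y|) is subharmonic on the region |y| > (b/a)^{1/β} in ℝ^d. -/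
/-!
With `u(l) = a l^β - b` and `m = 1/ν`, the function is `g = u^{-m}`, and a direct computation gives
`g'' + (d-1)/l g' = m a β l^{β-2} u^{-m-2} ((m+1) β a l^β - (β+d-2) u)`.
Since `0 < u ≤ a l^β`, the bracket is at least `a l^β (m β - (d-2)) ≥ 0` when `β + d - 2 ≥ 0`,
and is a sum of positive terms otherwise.
-/

open Filter Topology

noncomputable section

def powProfile (a b β m : ℝ) (x : ℝ) : ℝ := (a * x ^ β - b) ^ (-m)

def powProfileDeriv (a b β m : ℝ) (x : ℝ) : ℝ :=
  -m * (a * β * x ^ (β - 1) * (a * x ^ β - b) ^ (-m - 1))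

def powProfileDeriv2 (a b β m : ℝ) (x : ℝ) : ℝ :=
  -m * (a * β * (β - 1) * x ^ (β - 2) * (a * x ^ β - b) ^ (-m - 1)
    + a * β * x ^ (β - 1) * ((-m - 1) * (a * β * x ^ (β - 1)) * (a * x ^ β - b) ^ (-m - 2)))

end

section

variable {a b β m x : ℝ}

theorem hasDerivAt_mul_rpow_sub (hx : 0 < x) :
    HasDerivAt (fun y => a * y ^ β - b) (a * β * x ^ (β - 1)) x := by
  simpa [mul_assoc] using
    ((Real.hasDerivAt_rpow_const (p := β) (Or.inl hx.ne')).const_mul a).sub_const b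

theorem eventually_pos_and_mul_rpow_sub_pos (hx : 0 < x) (hu : 0 < a * x ^ β - b) :
    ∀ᶠ y in 𝓝 x, 0 < y ∧ 0 < a * y ^ β - b :=
  (lt_mem_nhds hx).and
    (continuousAt_const.eventually_lt (hasDerivAt_mul_rpow_sub hx).continuousAt hu)

theorem hasDerivAt_powProfile (hx : 0 < x) (hu : 0 < a * x ^ β - b) :
    HasDerivAt (powProfile a b β m) (powProfileDeriv a b β m x) x := by
  refine ((hasDerivAt_mul_rpow_sub hx).rpow_const (p := -m) (Or.inl hu.ne')).congr_deriv ?_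
  rw [powProfileDeriv]
  ring

theorem hasDerivAt_powProfileDeriv (hx : 0 < x) (hu : 0 < a * x ^ β - b) :
    HasDerivAt (powProfileDeriv a b β m) (powProfileDeriv2 a b β m x) x := by
  have hpow : HasDerivAt (fun y => a * β * y ^ (β - 1)) (a * β * ((β - 1) * x ^ (β - 2))) x := by
    simpa [sub_sub, one_add_one_eq_two] using
      (Real.hasDerivAt_rpow_const (p := β - 1) (Or.inl hx.ne')).const_mul (a * β)
  have hu' := (hasDerivAt_mul_rpow_sub (a := a) (b := b) (β := β) hx).rpow_const
    (p := -m - 1) (Or.inl hu.ne')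
  have h : HasDerivAt (fun y => -m * (a * β * y ^ (β - 1) * (a * y ^ β - b) ^ (-m - 1))) _ x :=
    (hpow.mul hu').const_mul (-m)
  refine h.congr_deriv ?_
  rw [powProfileDeriv2, sub_sub, one_add_one_eq_two]
  ring

theorem deriv_deriv_powProfile (hx : 0 < x) (hu : 0 < a * x ^ β - b) :
    deriv (deriv (powProfile a b β m)) x = powProfileDeriv2 a b β m x := by
  have hderiv : deriv (powProfile a b β m) =ᶠ[𝓝 x] powProfileDeriv a b β m :=
    (eventually_pos_and_mul_rpow_sub_pos hx hu).mono fun y hy =>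
      (hasDerivAt_powProfile hy.1 hy.2).deriv
  rw [hderiv.deriv_eq, (hasDerivAt_powProfileDeriv hx hu).deriv]

theorem powProfile_radial_eq {d : ℝ} (hx : 0 < x) (hu : 0 < a * x ^ β - b) :
    powProfileDeriv2 a b β m x + (d - 1) / x * powProfileDeriv a b β m x
      = m * a * β * x ^ (β - 2) * (a * x ^ β - b) ^ (-m - 2)
        * ((m + 1) * β * (a * x ^ β) - (a * x ^ β - b) * (β + d - 2)) := by
  have hx1 : x ^ (β - 1) = x ^ (β - 2) * x := by
    rw [← Real.rpow_add_one hx.ne']; ring_nf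
  have hx0 : x ^ β = x ^ (β - 2) * x * x := by
    rw [← Real.rpow_add_one hx.ne', ← Real.rpow_add_one hx.ne']; ring_nf
  have hu1 : (a * x ^ β - b) ^ (-m - 1) = (a * x ^ β - b) ^ (-m - 2) * (a * x ^ β - b) := by
    rw [← Real.rpow_add_one hu.ne']; ring_nf
  simp only [powProfileDeriv2, powProfileDeriv]
  rw [hu1, hx1]
  generalize hU : a * x ^ β - b = U
  rw [hx0]
  field_simp
  ring

theorem radial_bracket_nonneg {d A U : ℝ} (hβ : 0 < β) (hm : 0 ≤ m) (hU : 0 < U) (hUA : U ≤ A)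
    (hdim : d - 2 ≤ m * β) : 0 ≤ (m + 1) * β * A - U * (β + d - 2) := by
  rcases le_or_gt 0 (β + d - 2) with h | h
  · nlinarith [mul_le_mul_of_nonneg_right hUA h]
  · nlinarith [mul_pos hU (neg_pos.mpr h), mul_nonneg (mul_nonneg (by linarith : 0 ≤ m + 1) hβ.le)
      (hU.le.trans hUA)]

theorem powProfile_radial_nonneg {d : ℝ} (hβ : 0 < β) (hm : 0 ≤ m) (ha : 0 ≤ a) (hb : 0 ≤ b)
    (hdim : d - 2 ≤ m * β) (hx : 0 < x) (hu : 0 < a * x ^ β - b) :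
    0 ≤ deriv (deriv (powProfile a b β m)) x + (d - 1) / x * deriv (powProfile a b β m) x := by
  rw [deriv_deriv_powProfile hx hu, (hasDerivAt_powProfile hx hu).deriv, powProfile_radial_eq hx hu]
  have hcoef : 0 ≤ m * a * β * x ^ (β - 2) * (a * x ^ β - b) ^ (-m - 2) := by
    have := Real.rpow_pos_of_pos hx (β - 2)
    have := Real.rpow_pos_of_pos hu (-m - 2)
    positivity
  exact mul_nonneg hcoef (radial_bracket_nonneg hβ hm hu (by linarith) hdim)

end

theorem stmt6_general (d : ℕ) (β ν a b : ℝ) (hν : 0 < ν) (hβν : ν < β)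
    (ha : 0 < a) (hb : 1 ≤ b) (hdim : (d:ℝ) - 2 ≤ β / ν)
    (g : ℝ → ℝ)
    (hg : ∀ l, (b/a) ^ (1/β) < l → g l = (a * l ^ β - b) ^ (-(1/ν))) :
    ∀ l, (b/a) ^ (1/β) < l →
      0 ≤ deriv (deriv g) l + ((d:ℝ)-1)/l * deriv g l := by
  intro l hl
  have hβ : 0 < β := hν.trans hβν
  have hba : 0 < b / a := div_pos (by linarith) ha
  have hl0 : 0 < l := (Real.rpow_nonneg hba.le _).trans_lt hl
  have hu : 0 < a * l ^ β - b := by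
    have : b / a < l ^ β := by
      simpa [Real.rpow_inv_rpow hba.le hβ.ne'] using
        Real.rpow_lt_rpow (Real.rpow_nonneg hba.le _) hl hβ
    linarith [(div_lt_iff₀' ha).mp this]
  have hgP : g =ᶠ[𝓝 l] powProfile a b β (1 / ν) :=
    eventually_of_mem (Ioi_mem_nhds hl) fun y hy => hg y hy
  rw [hgP.deriv.deriv_eq, hgP.deriv_eq]
  exact powProfile_radial_nonneg hβ (by positivity) ha.le (by linarith)
    (by rwa [one_div_mul_eq_div]) hl0 hu

theorem stmt6 (d : ℕ) (hd : 1 ≤ d) (β ν a b : ℝ) (hν : 0 < ν) (hβν : ν < β)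
    (ha : 0 < a) (ha1 : a ≤ 1) (hb : 1 ≤ b) (hdim : (d:ℝ) - 2 ≤ β / ν)
    (g : ℝ → ℝ)
    (hg : ∀ l, (b/a) ^ (1/β) < l → g l = (a * l ^ β - b) ^ (-(1/ν))) :
    ∀ l, (b/a) ^ (1/β) < l →
      0 ≤ deriv (deriv g) l + ((d:ℝ)-1)/l * deriv g l :=
  stmt6_general d β ν a b hν hβν ha hb hdim g hg
end

section
/- Let d ≥ 1, s ∈ (0,1), and let u: ℝ^d → ℝ be bounded with |u| ≤ M, and assume that for all unit vectors e and all x, the second difference satisfies 2u(x) − u(x+h) − u(x−h) ≤ (C+1)ρ|h|² for |h| ≤ ρ^{−1/2}, where ρ ∈ (0,1]. Then for every x, the quantity c_{s,d}/2 · ∫_{|h|≤ρ^{−1/2}} (2u(x)−u(x+h)−u(x−h))/|h|^{d+2s} dh + c_{s,d} ∫_{|h|>ρ^{−1/2}} (u(x)−u(x+h))/|h|^{d+2s} dh is at most (c_{s,d} ω_d (C+1)/(2s(1−s))) · ρ^s, where ω_d is the surface area of the unit sphere and M ≤ 1. -/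
/-!
Split at `R = ρ^(-1/2)`. For `|h| ≤ R` the second-difference bound dominates the integrand by the
radial function `(C+1) ρ |h|^(2-d-2s)`, and for `|h| > R` the bound `0 ≤ u ≤ 1` dominates it by
`|h|^(-d-2s)`. In polar coordinates these majorants integrate to `ω_d (C+1) ρ R^(2-2s) / (2-2s)`
and `ω_d R^(-2s) / (2s)`, both multiples of `ω_d ρ^s`, and
`(C+1) / (4(1-s)) + 1 / (2s) ≤ (C+1) / (2s(1-s))`.
-/

open MeasureTheory Set Metric

theorem setIntegral_le_setIntegral_of_nonneg {α : Type*} [MeasurableSpace α] {μ : Measure α}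
    {f g : α → ℝ} {s : Set α} (hs : MeasurableSet s) (hg : IntegrableOn g s μ)
    (hg₀ : ∀ x ∈ s, 0 ≤ g x) (hfg : ∀ x ∈ s, f x ≤ g x) :
    ∫ x in s, f x ∂μ ≤ ∫ x in s, g x ∂μ := by
  by_cases hf : IntegrableOn f s μ
  · exact setIntegral_mono_on hf hg hs hfg
  · rw [integral_undef hf]
    exact setIntegral_nonneg hs hg₀

theorem pow_pred_mul_rpow {y : ℝ} (hy : 0 < y) {n : ℕ} (hn : 1 ≤ n) (p : ℝ) :
    y ^ (n - 1) * y ^ p = y ^ (p + n - 1) := by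
  rw [← Real.rpow_natCast, ← Real.rpow_add hy, Nat.cast_sub hn, Nat.cast_one]
  ring_nf

theorem integral_Ioc_zero_rpow {R r : ℝ} (hR : 0 ≤ R) (hr : -1 < r) :
    ∫ y in Ioc 0 R, y ^ r = R ^ (r + 1) / (r + 1) := by
  rw [← intervalIntegral.integral_of_le hR, integral_rpow (Or.inl hr),
    Real.zero_rpow (by linarith), sub_zero]

theorem div_four_mul_one_sub_add_one_div_two_mul_le {C s : ℝ} (hC : 0 ≤ C) (hs : 0 < s)
    (hs1 : s < 1) : (C + 1) / (4 * (1 - s)) + 1 / (2 * s) ≤ (C + 1) / (2 * s * (1 - s)) := by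
  rw [div_add_div _ _ (by linarith) (by linarith), div_le_div_iff₀ (by nlinarith) (by nlinarith)]
  have hgap : 0 ≤ C * (2 - s) + s := by nlinarith
  nlinarith [mul_nonneg (mul_pos hs (sub_pos.2 hs1)).le hgap]

section Polar

variable {E : Type*} [NormedAddCommGroup E] [NormedSpace ℝ E] [MeasurableSpace E] [BorelSpace E]
  [FiniteDimensional ℝ E] [Nontrivial E] (μ : Measure E) [μ.IsAddHaarMeasure]
  {g : ℝ → ℝ} {T : Set ℝ}

local notation "n" => Module.finrank ℝ E

theorem integrableOn_preimage_norm_fun_norm_addHaar (hT : MeasurableSet T) :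
    IntegrableOn (fun x : E => g ‖x‖) {x | ‖x‖ ∈ T} μ ↔
      IntegrableOn (fun y => y ^ (n - 1) * g y) (T ∩ Ioi 0) := by
  have hS : MeasurableSet {x : E | ‖x‖ ∈ T} := hT.preimage measurable_norm
  rw [← integrable_indicator_iff hS]
  change Integrable (fun x => T.indicator g ‖x‖) μ ↔ _
  rw [integrable_fun_norm_addHaar, ← integrableOn_indicator_iff hT]
  simp only [smul_eq_mul]
  congr! 1
  ext y
  exact (indicator_mul_right T _ g).symm

theorem setIntegral_preimage_norm_fun_norm_addHaar (hT : MeasurableSet T) :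
    ∫ x in {x : E | ‖x‖ ∈ T}, g ‖x‖ ∂μ =
      n * μ.real (ball 0 1) * ∫ y in T ∩ Ioi 0, y ^ (n - 1) * g y := by
  have hS : MeasurableSet {x : E | ‖x‖ ∈ T} := hT.preimage measurable_norm
  rw [← integral_indicator hS]
  change ∫ x, T.indicator g ‖x‖ ∂μ = _
  rw [integral_fun_norm_addHaar, inter_comm, ← setIntegral_indicator hT]
  simp only [smul_eq_mul, indicator_mul_right, nsmul_eq_mul, mul_assoc]

theorem setIntegral_preimage_norm_le_of_le_fun_norm (hT : MeasurableSet T) {f : E → ℝ}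
    (hfg : ∀ x, ‖x‖ ∈ T → f x ≤ g ‖x‖) (hg₀ : ∀ y ∈ T, 0 ≤ y → 0 ≤ g y)
    (hg : IntegrableOn (fun y => y ^ (n - 1) * g y) (T ∩ Ioi 0)) :
    ∫ x in {x : E | ‖x‖ ∈ T}, f x ∂μ ≤
      n * μ.real (ball 0 1) * ∫ y in T ∩ Ioi 0, y ^ (n - 1) * g y := by
  rw [← setIntegral_preimage_norm_fun_norm_addHaar μ hT]
  exact setIntegral_le_setIntegral_of_nonneg (hT.preimage measurable_norm)
    ((integrableOn_preimage_norm_fun_norm_addHaar μ hT).2 hg)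
    (fun x hx => hg₀ _ hx (norm_nonneg x)) hfg

theorem setIntegral_norm_le_div_rpow_le {F : E → ℝ} {R K a : ℝ} (hR : 0 ≤ R) (ha : a < 2)
    (hK : 0 ≤ K) (hF : ∀ x, ‖x‖ ≤ R → F x ≤ K * ‖x‖ ^ 2) :
    ∫ x in {x : E | ‖x‖ ≤ R}, F x / ‖x‖ ^ ((n : ℝ) + a) ∂μ ≤
      n * μ.real (ball 0 1) * (K * R ^ (2 - a) / (2 - a)) := by
  have hn : 1 ≤ n := Module.finrank_pos
  have hweight : ∀ y ∈ Ioc 0 R, y ^ (n - 1) * (K * y ^ (2 - (n + a))) = K * y ^ (1 - a) :=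
    fun y hy => by
      rw [mul_left_comm, pow_pred_mul_rpow hy.1 hn]
      ring_nf
  have hint : IntegrableOn (fun y : ℝ => K * y ^ (1 - a)) (Ioc 0 R) :=
    ((intervalIntegral.intervalIntegrable_rpow' (by linarith)).1).const_mul K
  calc ∫ x in {x : E | ‖x‖ ≤ R}, F x / ‖x‖ ^ ((n : ℝ) + a) ∂μ
      ≤ n * μ.real (ball 0 1) *
          ∫ y in Iic R ∩ Ioi 0, y ^ (n - 1) * (K * y ^ (2 - (n + a))) := by
        refine setIntegral_preimage_norm_le_of_le_fun_norm μ measurableSet_Iic (fun x hx => ?_)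
          (fun y _ hy => by positivity) ?_
        · rcases (norm_nonneg x).eq_or_lt with hzero | hpos
          · have hF₀ : F x ≤ 0 := by simpa [← hzero] using hF x hx
            exact (div_nonpos_of_nonpos_of_nonneg hF₀ (by positivity)).trans (by positivity)
          · rw [Real.rpow_sub hpos, Real.rpow_two, mul_div_assoc']
            exact div_le_div_of_nonneg_right (hF x hx) (by positivity)
        · rw [inter_comm, Ioi_inter_Iic]
          exact hint.congr_fun (fun y hy => (hweight y hy).symm) measurableSet_Ioc
    _ = n * μ.real (ball 0 1) * (K * R ^ (2 - a) / (2 - a)) := by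
        rw [inter_comm, Ioi_inter_Iic, setIntegral_congr_fun measurableSet_Ioc hweight,
          integral_const_mul, integral_Ioc_zero_rpow hR (by linarith)]
        ring_nf

theorem setIntegral_lt_norm_div_rpow_le {F : E → ℝ} {R M a : ℝ} (hR : 0 < R) (ha : 0 < a)
    (hM : 0 ≤ M) (hF : ∀ x, R < ‖x‖ → F x ≤ M) :
    ∫ x in {x : E | R < ‖x‖}, F x / ‖x‖ ^ ((n : ℝ) + a) ∂μ ≤
      n * μ.real (ball 0 1) * (M * R ^ (-a) / a) := by
  have hn : 1 ≤ n := Module.finrank_pos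
  have hIoi : Ioi R ∩ Ioi 0 = Ioi R := inter_eq_left.2 (Ioi_subset_Ioi hR.le)
  have hweight : ∀ y ∈ Ioi R, y ^ (n - 1) * (M * y ^ (-(n + a))) = M * y ^ (-1 - a) :=
    fun y hy => by
      rw [mul_left_comm, pow_pred_mul_rpow (hR.trans hy) hn]
      ring_nf
  have hint : IntegrableOn (fun y : ℝ => M * y ^ (-1 - a)) (Ioi R) :=
    (integrableOn_Ioi_rpow_of_lt (by linarith) hR).const_mul M
  calc ∫ x in {x : E | R < ‖x‖}, F x / ‖x‖ ^ ((n : ℝ) + a) ∂μ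
      ≤ n * μ.real (ball 0 1) *
          ∫ y in Ioi R ∩ Ioi 0, y ^ (n - 1) * (M * y ^ (-(n + a))) := by
        refine setIntegral_preimage_norm_le_of_le_fun_norm μ measurableSet_Ioi (fun x hx => ?_)
          (fun y _ hy => by positivity) ?_
        · rw [Real.rpow_neg (norm_nonneg x), ← div_eq_mul_inv]
          exact div_le_div_of_nonneg_right (hF x hx) (by positivity)
        · rw [hIoi]
          exact hint.congr_fun (fun y hy => (hweight y hy).symm) measurableSet_Ioi
    _ = n * μ.real (ball 0 1) * (M * R ^ (-a) / a) := by
        rw [hIoi, setIntegral_congr_fun measurableSet_Ioi hweight, integral_const_mul,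
          integral_Ioi_rpow_of_lt (by linarith) hR]
        ring_nf

end Polar

theorem stmt7_general (d : ℕ) (hd : 1 ≤ d) (s ρ C csd ωd : ℝ)
    (hs : 0 < s) (hs1 : s < 1) (hρ : 0 < ρ) (hC : 0 ≤ C) (hc : 0 < csd)
    (hω : ωd = d * (volume (Metric.ball (0 : EuclideanSpace ℝ (Fin d)) 1)).toReal)
    (u : EuclideanSpace ℝ (Fin d) → ℝ)
    (hu0 : ∀ x, 0 ≤ u x) (hu1 : ∀ x, u x ≤ 1)
    (hsecond : ∀ (x h : EuclideanSpace ℝ (Fin d)), ‖h‖ ≤ ρ ^ (-(1/2) : ℝ) →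
      2 * u x - u (x + h) - u (x - h) ≤ (C+1) * ρ * ‖h‖^2) :
    ∀ x : EuclideanSpace ℝ (Fin d),
      csd/2 * (∫ h in {h : EuclideanSpace ℝ (Fin d) | ‖h‖ ≤ ρ ^ (-(1/2):ℝ)},
          (2*u x - u (x+h) - u (x-h)) / ‖h‖ ^ ((d:ℝ)+2*s))
      + csd * (∫ h in {h : EuclideanSpace ℝ (Fin d) | ρ ^ (-(1/2):ℝ) < ‖h‖},
          (u x - u (x+h)) / ‖h‖ ^ ((d:ℝ)+2*s))
      ≤ csd * ωd * (C+1) / (2*s*(1-s)) * ρ ^ s := by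
  intro x
  have : Nonempty (Fin d) := ⟨⟨0, hd⟩⟩
  set R := ρ ^ (-(1/2) : ℝ)
  have hR : 0 < R := Real.rpow_pos_of_pos hρ _
  have hnear := setIntegral_norm_le_div_rpow_le volume (a := 2 * s) hR.le (by linarith)
    (by positivity) (hsecond x)
  have hfar := setIntegral_lt_norm_div_rpow_le volume (F := fun h => u x - u (x + h))
    (a := 2 * s) hR (by linarith) zero_le_one (fun h _ => by linarith [hu0 (x + h), hu1 x])
  simp only [finrank_euclideanSpace_fin, Measure.real, ← hω] at hnear hfar
  have hω₀ : 0 ≤ ωd := hω ▸ by positivity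
  have hnear_rpow : (C + 1) * ρ * R ^ (2 - 2 * s) = (C + 1) * ρ ^ s := by
    rw [mul_assoc, ← Real.rpow_mul hρ.le, ← Real.rpow_one_add' hρ.le (by linarith)]
    ring_nf
  have hfar_rpow : R ^ (-(2 * s)) = ρ ^ s := by
    rw [← Real.rpow_mul hρ.le]
    ring_nf
  calc _ ≤ csd / 2 * (ωd * ((C + 1) * ρ * R ^ (2 - 2 * s) / (2 - 2 * s)))
        + csd * (ωd * (1 * R ^ (-(2 * s)) / (2 * s))) := by gcongr
    _ = csd * ωd * ρ ^ s * ((C + 1) / (4 * (1 - s)) + 1 / (2 * s)) := by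
        rw [hnear_rpow, hfar_rpow]
        field_simp
        ring
    _ ≤ csd * ωd * ρ ^ s * ((C + 1) / (2 * s * (1 - s))) := by
        gcongr
        exact div_four_mul_one_sub_add_one_div_two_mul_le hC hs hs1
    _ = _ := by ring

theorem stmt7 (d : ℕ) (hd : 1 ≤ d) (s ρ C csd ωd : ℝ)
    (hs : 0 < s) (hs1 : s < 1) (hρ : 0 < ρ) (hρ1 : ρ ≤ 1) (hC : 0 ≤ C) (hc : 0 < csd)
    (hω : ωd = d * (volume (Metric.ball (0 : EuclideanSpace ℝ (Fin d)) 1)).toReal)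
    (u : EuclideanSpace ℝ (Fin d) → ℝ)
    (hu0 : ∀ x, 0 ≤ u x) (hu1 : ∀ x, u x ≤ 1)
    (hsecond : ∀ (x h : EuclideanSpace ℝ (Fin d)), ‖h‖ ≤ ρ ^ (-(1/2) : ℝ) →
      2 * u x - u (x + h) - u (x - h) ≤ (C+1) * ρ * ‖h‖^2) :
    ∀ x : EuclideanSpace ℝ (Fin d),
      csd/2 * (∫ h in {h : EuclideanSpace ℝ (Fin d) | ‖h‖ ≤ ρ ^ (-(1/2):ℝ)},
          (2*u x - u (x+h) - u (x-h)) / ‖h‖ ^ ((d:ℝ)+2*s))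
      + csd * (∫ h in {h : EuclideanSpace ℝ (Fin d) | ρ ^ (-(1/2):ℝ) < ‖h‖},
          (u x - u (x+h)) / ‖h‖ ^ ((d:ℝ)+2*s))
      ≤ csd * ωd * (C+1) / (2*s*(1-s)) * ρ ^ s :=
  stmt7_general d hd s ρ C csd ωd hs hs1 hρ hC hc hω u hu0 hu1 hsecond
end

section
/- Let 0 < s < 1/2, k a positive integer, and T_k := 2^{(2s)^{−k}}. If 1 ≤ t ≤ T_k and β_k^k := 2^{−Σ_{j=1}^{k} j (2s)^{j−1}}, then l_k^k(t) := Σ_{j=0}^{k} β_j^k t^{1/(2s) − (2s)^j} satisfies l_k^k(t) ≥ 2^{−1/(1−2s)² − 1} t^{1/(2s)}. -/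
/-!
All terms of `l_k^k(t)` are nonnegative, so it dominates its last term `β_k t^{1/(2s) - (2s)^k}`.
The exponent of `β_k` is `∑_{j<k} (j+1)(2s)^j`, a partial sum of `∑ (j+1) x^j = (1-x)⁻²`, so
`β_k ≥ 2^{-1/(1-2s)²}`; and `t ≤ 2^{(2s)^{-k}}` means exactly `t^{(2s)^k} ≤ 2`.
-/

open Finset

lemma sum_range_add_one_mul_pow_le {x : ℝ} (hx0 : 0 ≤ x) (hx1 : x < 1) (n : ℕ) :
    ∑ j ∈ range n, ((j : ℝ) + 1) * x ^ j ≤ 1 / (1 - x) ^ 2 := by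
  have hsum : HasSum (fun j : ℕ ↦ ((j : ℝ) + 1) * x ^ j) (1 / (1 - x) ^ 2) := by
    simpa using hasSum_choose_mul_geometric_of_norm_lt_one 1
      (by rwa [Real.norm_of_nonneg hx0] : ‖x‖ < 1)
  exact sum_le_hasSum _ (fun j _ ↦ by positivity) hsum

lemma Real.div_le_rpow_sub {t b : ℝ} (ht : 0 < t) (a c : ℝ) (h : t ^ c ≤ b) :
    t ^ a / b ≤ t ^ (a - c) := by
  rw [Real.rpow_sub ht]
  exact div_le_div_of_nonneg_left (by positivity) (by positivity) h

theorem stmt10_general (s : ℝ) (hs : 0 < s) (hs2 : s < 1/2) (k : ℕ)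
    (α β : ℕ → ℝ)
    (hα : ∀ n ≤ k, α n = ∑ j ∈ Finset.range n, ((k : ℝ) - n + (j + 1)) * (2*s)^j)
    (hβ : ∀ n ≤ k, β n = (2:ℝ) ^ (-(α n)))
    (t : ℝ) (ht1 : 1 ≤ t) (ht2 : t ≤ (2:ℝ) ^ ((2*s) ^ (-(k:ℝ)))) :
    (2:ℝ) ^ (-(1/(1-2*s)^2) - 1) * t ^ (1/(2*s)) ≤
      ∑ j ∈ Finset.range (k+1), β j * t ^ (1/(2*s) - (2*s)^j) := by
  set x := 2 * s
  have hx0 : 0 < x := by positivity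
  have ht0 : 0 < t := by linarith
  have hαk : α k ≤ 1 / (1 - x) ^ 2 := by
    rw [hα k le_rfl]
    convert sum_range_add_one_mul_pow_le hx0.le (by linarith) k using 2 with j
    ring
  have hβk : (2:ℝ) ^ (-(1 / (1 - x) ^ 2)) ≤ β k := by
    rw [hβ k le_rfl]
    exact Real.rpow_le_rpow_of_exponent_le (by norm_num) (by linarith)
  have htk : t ^ (x ^ k : ℝ) ≤ 2 := by
    rw [← Real.le_rpow_inv_iff_of_pos ht0.le (by norm_num) (by positivity)]
    simpa [Real.rpow_neg hx0.le, Real.rpow_natCast] using ht2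
  have hβ_nonneg : ∀ j ∈ range (k + 1), 0 ≤ β j := fun j hj ↦ by
    rw [hβ j (Nat.lt_succ_iff.mp (mem_range.mp hj))]
    positivity
  calc (2:ℝ) ^ (-(1 / (1 - x) ^ 2) - 1) * t ^ (1 / x)
      = (2:ℝ) ^ (-(1 / (1 - x) ^ 2)) * (t ^ (1 / x) / 2) := by
        rw [Real.rpow_sub two_pos, Real.rpow_one]; ring
    _ ≤ β k * t ^ (1 / x - x ^ k) :=
        mul_le_mul hβk (Real.div_le_rpow_sub ht0 _ _ htk) (by positivity)
          (hβ_nonneg k (self_mem_range_succ k))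
    _ ≤ ∑ j ∈ range (k + 1), β j * t ^ (1 / x - x ^ j) :=
        single_le_sum (f := fun j ↦ β j * t ^ (1 / x - x ^ j))
          (fun j hj ↦ mul_nonneg (hβ_nonneg j hj) (by positivity)) (self_mem_range_succ k)

theorem stmt10 (s : ℝ) (hs : 0 < s) (hs2 : s < 1/2) (k : ℕ) (hk : 1 ≤ k)
    (α β : ℕ → ℝ)
    (hα : ∀ n ≤ k, α n = ∑ j ∈ Finset.range n, ((k : ℝ) - n + (j + 1)) * (2*s)^j)
    (hβ : ∀ n ≤ k, β n = (2:ℝ) ^ (-(α n)))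
    (t : ℝ) (ht1 : 1 ≤ t) (ht2 : t ≤ (2:ℝ) ^ ((2*s) ^ (-(k:ℝ)))) :
    (2:ℝ) ^ (-(1/(1-2*s)^2) - 1) * t ^ (1/(2*s)) ≤
      ∑ j ∈ Finset.range (k+1), β j * t ^ (1/(2*s) - (2*s)^j) :=
  stmt10_general s hs hs2 k α β hα hβ t ht1 ht2
end
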